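/- Fix ε ∈ (0,1) and φ ∈ C²_b(ℝ³). There is a constant C > 0, depending only on γ, χ and ‖φ‖_{C²}, such that for every t ∈ [0,T] and every measurable family (f_s)_{s∈[0,t]} of probability densities on ℝ³ with ∫_0^t ‖f_s‖_{L³(ℝ³)} ds < ∞: | ∫_0^t ∫_{ℝ³×ℝ³} [ (b(v−w) − b_ε(v−w))·(∇φ(v)−∇φ(w)) + (α(|v−w|) − α_ε(|v−w|)) a(v−w) : ∇²φ(v) ] f_s(v) f_s(w) dv dw ds | ≤ C · ε^{(γ+4)/2} · ∫_0^t ‖f_s‖_{L³(ℝ³)} ds, where for z ≠ 0, b(z) := −2 |z|^γ z and α(|z|) = |z|^γ, with the integrand taken to be 0 on the diagonal v = w. -/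

import Mathlib

/- STATEMENT 19:
Fix ε ∈ (0,1) and φ ∈ C²_b(ℝ³).  There is C > 0, depending only on γ, χ and the C² norm
of φ, such that for every t and every measurable family (f_s) of probability densities
with ∫₀ᵗ ‖f_s‖_{L³} ds < ∞:
 | ∫₀ᵗ ∫∫ [ (b−b_ε)(v−w)·(∇φ(v)−∇φ(w)) + (α−α_ε)(|v−w|) a(v−w):∇²φ(v) ] f_s(v) f_s(w) |
   ≤ C ε^{(γ+4)/2} ∫₀ᵗ ‖f_s‖_{L³},
the integrand taken to be 0 on the diagonal v = w. -/

open MeasureTheory Real Classical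
open scoped RealInnerProductSpace ENNReal

noncomputable section

abbrev E3 := EuclideanSpace ℝ (Fin 3)

/-- The regularized potential `α_ε(r) = (ε χ(r/ε))^γ`. -/
def alphaEps (γ : ℝ) (χ : ℝ → ℝ) (ε r : ℝ) : ℝ := (ε * χ (r / ε)) ^ γ

/-- The regularized drift `b_ε(z) = −2 α_ε(|z|) z`. -/
def bEps (γ : ℝ) (χ : ℝ → ℝ) (ε : ℝ) (z : E3) : E3 := (-(2 * alphaEps γ χ ε ‖z‖)) • z

/-- The singular drift `b(z) = −2 |z|^γ z`. -/
def bSing (γ : ℝ) (z : E3) : E3 := (-(2 * ‖z‖ ^ γ)) • z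

/-- `a(v−w) : ∇²φ(v) = |z|² Δφ(v) − ⟪z, ∇²φ(v) z⟫` with `z = v − w`. -/
def aContractHess (φ : E3 → ℝ) (v z : E3) : ℝ :=
  ‖z‖ ^ 2 * (∑ c : Fin 3, (iteratedFDeriv ℝ 2 φ v)
      ![EuclideanSpace.single c 1, EuclideanSpace.single c 1])
    - (iteratedFDeriv ℝ 2 φ v) ![z, z]

lemma pow_rpow_comm {x : ℝ} (hx : 0 ≤ x) (q : ℝ) (n : ℕ) :
    (x ^ n) ^ q = (x ^ q) ^ n := by
  rw [← Real.rpow_natCast x n, ← Real.rpow_mul hx, mul_comm, Real.rpow_mul hx, Real.rpow_natCast]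

lemma kernel_lintegral_bound (q : ℝ) (hq : -2 < q) (hq0 : q ≤ 0) :
    ∃ Cq : ℝ≥0∞, Cq ≠ ⊤ ∧ ∀ ε : ℝ, 0 < ε →
      (∫⁻ z : E3, (if ‖z‖ ≤ ε then ENNReal.ofReal (‖z‖ ^ q) else 0)) ≤
        ENNReal.ofReal (ε ^ (q + 3)) * Cq := by
  set d : ℝ := 1/2 with hd_def
  have hd : 0 < d := by norm_num
  have hd1 : d < 1 := by norm_num
  set c : ℝ := d ^ q with hc_def
  have hc : 0 < c := Real.rpow_pos_of_pos hd q
  set ρ : ℝ := d ^ (q + 3) with hρ_def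
  have hρ0 : 0 < ρ := Real.rpow_pos_of_pos hd _
  have hρ1 : ρ < 1 := Real.rpow_lt_one hd.le hd1 (by linarith)
  set B : ℝ≥0∞ := volume (Metric.ball (0 : E3) 1) with hB_def
  have hB : B ≠ ⊤ := measure_ball_lt_top.ne
  refine ⟨ENNReal.ofReal c * (1 - ENNReal.ofReal ρ)⁻¹ * B, ?_, ?_⟩
  · refine ENNReal.mul_ne_top (ENNReal.mul_ne_top ENNReal.ofReal_ne_top ?_) hB
    rw [ENNReal.inv_ne_top]
    exact (tsub_pos_of_lt (ENNReal.ofReal_lt_one.2 hρ1)).ne'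
  intro ε hε
  set rn : ℕ → ℝ := fun n => ε * d ^ n with hrn_def
  have hrn : ∀ n, 0 < rn n := fun n => mul_pos hε (pow_pos hd n)
  set S : ℕ → Set E3 := fun n =>
    Metric.closedBall (0 : E3) (rn n) \ Metric.closedBall (0 : E3) (rn (n+1)) with hS_def
  set g : ℕ → E3 → ℝ≥0∞ := fun n =>
    (S n).indicator (fun _ => ENNReal.ofReal ((rn (n+1)) ^ q)) with hg_def
  -- pointwise bound
  have hpt : ∀ z : E3, (if ‖z‖ ≤ ε then ENNReal.ofReal (‖z‖ ^ q) else 0) ≤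
      ({(0:E3)} : Set E3).indicator (fun _ => ENNReal.ofReal (‖(0:E3)‖ ^ q)) z + ∑' n, g n z := by
    intro z
    by_cases hz : ‖z‖ ≤ ε
    · rw [if_pos hz]
      by_cases hz0 : z = 0
      · subst hz0
        rw [Set.indicator_of_mem (Set.mem_singleton _)]
        exact le_self_add
      · have hzpos : 0 < ‖z‖ := norm_pos_iff.2 hz0
        -- find the dyadic shell containing z
        have hex : ∃ m, ε * d ^ m < ‖z‖ := by
          obtain ⟨m, hm⟩ := exists_pow_lt_of_lt_one (div_pos hzpos hε) hd1
          exact ⟨m, by rwa [← lt_div_iff₀' hε]⟩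
        have h0 : ¬ (ε * d ^ 0 < ‖z‖) := by simpa using hz
        set m := Nat.find hex with hm_def
        have hm_spec : ε * d ^ m < ‖z‖ := Nat.find_spec hex
        have hm_pos : m ≠ 0 := by
          intro h
          exact h0 (h ▸ hm_spec)
        obtain ⟨k, hk⟩ : ∃ k, m = k + 1 := ⟨m - 1, (Nat.succ_pred_eq_of_pos (Nat.pos_of_ne_zero hm_pos)).symm⟩
        have h1 : rn (k+1) < ‖z‖ := by rw [hrn_def]; exact hk ▸ hm_spec
        have h2 : ‖z‖ ≤ rn k := by
          have := Nat.find_min hex (by omega : k < m)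
          simpa [hrn_def] using not_lt.1 this
        have hmem : z ∈ S k := by
          constructor
          · simpa [mem_closedBall_zero_iff] using h2
          · simpa [mem_closedBall_zero_iff] using not_le.2 h1
        calc ENNReal.ofReal (‖z‖ ^ q) ≤ ENNReal.ofReal ((rn (k+1)) ^ q) :=
              ENNReal.ofReal_le_ofReal
                (Real.rpow_le_rpow_of_nonpos (hrn (k+1)) h1.le hq0)
          _ = g k z := by rw [hg_def]; simp [Set.indicator_of_mem hmem]
          _ ≤ ∑' n, g n z := ENNReal.le_tsum k
          _ ≤ _ := le_add_self
    · rw [if_neg hz]; exact zero_le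
  calc (∫⁻ z : E3, (if ‖z‖ ≤ ε then ENNReal.ofReal (‖z‖ ^ q) else 0))
      ≤ ∫⁻ z : E3, (({(0:E3)} : Set E3).indicator (fun _ => ENNReal.ofReal (‖(0:E3)‖ ^ q)) z
          + ∑' n, g n z) := lintegral_mono hpt
    _ = (∫⁻ z : E3, ({(0:E3)} : Set E3).indicator (fun _ => ENNReal.ofReal (‖(0:E3)‖ ^ q)) z)
          + ∫⁻ z : E3, ∑' n, g n z := by
        apply lintegral_add_left
        exact measurable_const.indicator (measurableSet_singleton _)
    _ = ∑' n, ∫⁻ z : E3, g n z := by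
        rw [lintegral_indicator (measurableSet_singleton _)]
        simp only [setLIntegral_const, measure_singleton, mul_zero, zero_add]
        rw [lintegral_tsum]
        intro n
        exact (measurable_const.indicator ((measurableSet_closedBall).diff measurableSet_closedBall)).aemeasurable
    _ ≤ ∑' n, (ENNReal.ofReal (ε ^ (q+3)) * ENNReal.ofReal c) * (ENNReal.ofReal ρ ^ n * B) := by
        apply ENNReal.tsum_le_tsum
        intro n
        rw [hg_def]
        rw [lintegral_indicator ((measurableSet_closedBall).diff measurableSet_closedBall)]
        rw [setLIntegral_const]
        have hmono : volume (S n) ≤ volume (Metric.closedBall (0:E3) (rn n)) :=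
          measure_mono Set.diff_subset
        have hvol : volume (Metric.closedBall (0:E3) (rn n)) = ENNReal.ofReal ((rn n) ^ 3) * B := by
          rw [Measure.addHaar_closedBall _ _ (hrn n).le]
          congr 2
          rw [finrank_euclideanSpace_fin]
        calc ENNReal.ofReal ((rn (n+1)) ^ q) * volume (S n)
            ≤ ENNReal.ofReal ((rn (n+1)) ^ q) * (ENNReal.ofReal ((rn n) ^ 3) * B) := by
              rw [← hvol]; exact mul_le_mul_right hmono _
          _ = ENNReal.ofReal ((rn (n+1)) ^ q * (rn n) ^ 3) * B := by
              rw [ENNReal.ofReal_mul (Real.rpow_nonneg (hrn (n+1)).le q), mul_assoc]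
          _ = (ENNReal.ofReal (ε ^ (q+3)) * ENNReal.ofReal c) * (ENNReal.ofReal ρ ^ n * B) := by
              have key : (rn (n+1)) ^ q * (rn n) ^ 3 = (ε ^ (q+3) * c) * ρ ^ n := by
                have e1 : (rn (n+1)) ^ q = ε ^ q * (c ^ (n+1)) := by
                  rw [hrn_def]
                  rw [Real.mul_rpow hε.le (pow_nonneg hd.le _), pow_rpow_comm hd.le]
                have e2 : (rn n : ℝ) ^ 3 = ε ^ 3 * ((d ^ 3) ^ n) := by
                  rw [hrn_def]
                  rw [mul_pow, ← pow_mul, mul_comm n 3, pow_mul]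
                have e3 : ε ^ (q + 3) = ε ^ q * ε ^ 3 := by
                  rw [Real.rpow_add hε, show ((3:ℝ)) = ((3:ℕ):ℝ) by norm_num,
                    Real.rpow_natCast]
                have e4 : ρ = c * d ^ 3 := by
                  rw [hρ_def, hc_def, Real.rpow_add hd, show ((3:ℝ)) = ((3:ℕ):ℝ) by norm_num,
                    Real.rpow_natCast]
                rw [e1, e2, e3, e4]
                ring
              rw [key]
              rw [ENNReal.ofReal_mul (by positivity), ENNReal.ofReal_mul (by positivity),
                ENNReal.ofReal_pow hρ0.le]
              ring
    _ = ENNReal.ofReal (ε ^ (q + 3)) * (ENNReal.ofReal c * (1 - ENNReal.ofReal ρ)⁻¹ * B) := by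
        rw [ENNReal.tsum_mul_left, ENNReal.tsum_mul_right, ENNReal.tsum_geometric]
        ring

lemma gradient_lip (φ : E3 → ℝ) (hφ : ContDiff ℝ 2 φ) (M : ℝ)
    (hM2 : ∀ x, ‖iteratedFDeriv ℝ 2 φ x‖ ≤ M) (v w : E3) :
    ‖gradient φ v - gradient φ w‖ ≤ M * ‖v - w‖ := by
  have hd : ContDiff ℝ 1 (fderiv ℝ φ) := hφ.fderiv_right (by norm_num)
  have key : ∀ x, ‖fderiv ℝ (fderiv ℝ φ) x‖ ≤ M := by
    intro x
    calc ‖fderiv ℝ (fderiv ℝ φ) x‖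
        = ‖iteratedFDeriv ℝ 0 (fderiv ℝ (fderiv ℝ φ)) x‖ := (norm_iteratedFDeriv_zero (f := fderiv ℝ (fderiv ℝ φ)) (x := x)).symm
      _ = ‖iteratedFDeriv ℝ 1 (fderiv ℝ φ) x‖ := norm_iteratedFDeriv_fderiv
      _ = ‖iteratedFDeriv ℝ 2 φ x‖ := norm_iteratedFDeriv_fderiv
      _ ≤ M := hM2 x
  have mv := convex_univ.norm_image_sub_le_of_norm_fderiv_le
    (f := fderiv ℝ φ) (fun x _ => (hd.differentiable one_ne_zero x))
    (fun x _ => key x) (Set.mem_univ w) (Set.mem_univ v)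
  calc ‖gradient φ v - gradient φ w‖
      = ‖fderiv ℝ φ v - fderiv ℝ φ w‖ := by
        rw [gradient, gradient, ← map_sub, LinearIsometryEquiv.norm_map]
    _ ≤ M * ‖v - w‖ := mv

lemma aContract_bound (φ : E3 → ℝ) (M : ℝ) (hM : 0 ≤ M) (v : E3)
    (hM2 : ‖iteratedFDeriv ℝ 2 φ v‖ ≤ M) (z : E3) :
    |aContractHess φ v z| ≤ 4 * M * ‖z‖ ^ 2 := by
  have hH : ∀ a b : E3, |(iteratedFDeriv ℝ 2 φ v) ![a, b]| ≤ M * (‖a‖ * ‖b‖) := by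
    intro a b
    have h := (iteratedFDeriv ℝ 2 φ v).le_opNorm ![a, b]
    have hprod : (∏ i : Fin 2, ‖(![a, b] : Fin 2 → E3) i‖) = ‖a‖ * ‖b‖ := by
      simp [Fin.prod_univ_two]
    rw [hprod] at h
    rw [← Real.norm_eq_abs]
    exact h.trans (mul_le_mul_of_nonneg_right hM2 (by positivity))
  have hS : |∑ c : Fin 3, (iteratedFDeriv ℝ 2 φ v)
      ![EuclideanSpace.single c 1, EuclideanSpace.single c 1]| ≤ 3 * M := by
    refine (Finset.abs_sum_le_sum_abs _ _).trans ?_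
    have hstep : ∀ c : Fin 3, |(iteratedFDeriv ℝ 2 φ v)
        ![EuclideanSpace.single c 1, EuclideanSpace.single c 1]| ≤ M := by
      intro c
      have := hH (EuclideanSpace.single c 1) (EuclideanSpace.single c (1:ℝ))
      simpa [EuclideanSpace.norm_single] using this
    refine (Finset.sum_le_sum fun c _ => hstep c).trans ?_
    simp [Finset.sum_const]
  have hT : |(iteratedFDeriv ℝ 2 φ v) ![z, z]| ≤ M * ‖z‖ ^ 2 := by
    have h := hH z z
    rwa [← pow_two] at h
  have h1 : |‖z‖ ^ 2 * (∑ c : Fin 3, (iteratedFDeriv ℝ 2 φ v)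
      ![EuclideanSpace.single c 1, EuclideanSpace.single c 1])|
      ≤ ‖z‖ ^ 2 * (3 * M) := by
    rw [abs_mul, abs_of_nonneg (by positivity : (0:ℝ) ≤ ‖z‖ ^ 2)]
    exact mul_le_mul_of_nonneg_left hS (by positivity)
  rw [aContractHess]
  refine ((abs_sub _ _).trans (add_le_add h1 hT)).trans_eq (by ring)

lemma pointwise_I_bound (γ : ℝ) (hγ1 : -3 ≤ γ) (hγ2 : γ ≤ -2) (χ : ℝ → ℝ)
    (hχ_pos : ∀ r ≥ (0:ℝ), 0 < χ r) (hχ_large : ∀ r ≥ (1:ℝ), χ r = r)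
    (hχ_ge : ∀ r ≥ (0:ℝ), r ≤ χ r)
    (ε : ℝ) (hε : 0 < ε) (φ : E3 → ℝ) (hφ : ContDiff ℝ 2 φ) (M : ℝ) (hM : 0 < M)
    (hM2 : ∀ x, ‖iteratedFDeriv ℝ 2 φ x‖ ≤ M) (v w : E3) :
    |(if v = w then 0 else
        (⟪bSing γ (v - w) - bEps γ χ ε (v - w), gradient φ v - gradient φ w⟫
          + (‖v - w‖ ^ γ - alphaEps γ χ ε ‖v - w‖) * aContractHess φ v (v - w)))|
      ≤ 6 * M * (if ‖v - w‖ ≤ ε then ‖v - w‖ ^ (γ + 2) else 0) := by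
  have hker_nonneg : (0:ℝ) ≤ if ‖v - w‖ ≤ ε then ‖v - w‖ ^ (γ + 2) else 0 := by
    split
    · exact Real.rpow_nonneg (norm_nonneg _) _
    · exact le_rfl
  by_cases hvw : v = w
  · rw [if_pos hvw, abs_zero]
    exact mul_nonneg (by linarith) hker_nonneg
  rw [if_neg hvw]
  set z := v - w with hz_def
  have hz : z ≠ 0 := sub_ne_zero.2 hvw
  have hz0 : 0 < ‖z‖ := norm_pos_iff.2 hz
  by_cases hle : ‖z‖ ≤ ε
  swap
  · -- outside the ball: everything vanishes
    rw [if_neg hle]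
    have h1 : (1:ℝ) ≤ ‖z‖ / ε := (one_le_div hε).2 (not_le.1 hle).le
    have hαeq : alphaEps γ χ ε ‖z‖ = ‖z‖ ^ γ := by
      rw [alphaEps, hχ_large _ h1, mul_div_cancel₀ _ hε.ne']
    have hb : bSing γ z - bEps γ χ ε z = 0 := by
      rw [bSing, bEps, hαeq, sub_self]
    rw [hb, inner_zero_left, hαeq, sub_self, zero_mul, add_zero, abs_zero, mul_zero]
  rw [if_pos hle]
  -- facts about alphaEps
  have hdiv : (0:ℝ) ≤ ‖z‖ / ε := div_nonneg hz0.le hε.le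
  have hαpos : 0 < alphaEps γ χ ε ‖z‖ :=
    Real.rpow_pos_of_pos (mul_pos hε (hχ_pos _ hdiv)) γ
  have hα_le : alphaEps γ χ ε ‖z‖ ≤ ‖z‖ ^ γ := by
    have hr : ‖z‖ ≤ ε * χ (‖z‖ / ε) := by
      have h := hχ_ge (‖z‖ / ε) hdiv
      calc ‖z‖ = ε * (‖z‖ / ε) := by field_simp
        _ ≤ ε * χ (‖z‖ / ε) := mul_le_mul_of_nonneg_left h hε.le
    exact Real.rpow_le_rpow_of_nonpos hz0 hr (by linarith)
  have hγ_pos : (0:ℝ) < ‖z‖ ^ γ := Real.rpow_pos_of_pos hz0 γ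
  -- first term
  have hb_norm : ‖bSing γ z - bEps γ χ ε z‖ ≤ 2 * ‖z‖ ^ γ * ‖z‖ := by
    have heq : bSing γ z - bEps γ χ ε z
        = ((-(2 * ‖z‖ ^ γ)) - (-(2 * alphaEps γ χ ε ‖z‖))) • z := by
      rw [bSing, bEps, sub_smul]
    rw [heq, norm_smul, Real.norm_eq_abs]
    apply mul_le_mul_of_nonneg_right _ (norm_nonneg z)
    rw [abs_of_nonpos (by linarith)]
    linarith
  have hgrad : ‖gradient φ v - gradient φ w‖ ≤ M * ‖z‖ := by
    rw [hz_def]; exact gradient_lip φ hφ M hM2 v w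
  have hterm1 : |⟪bSing γ z - bEps γ χ ε z, gradient φ v - gradient φ w⟫|
      ≤ (2 * ‖z‖ ^ γ * ‖z‖) * (M * ‖z‖) := by
    calc |⟪bSing γ z - bEps γ χ ε z, gradient φ v - gradient φ w⟫|
        ≤ ‖bSing γ z - bEps γ χ ε z‖ * ‖gradient φ v - gradient φ w‖ :=
          abs_real_inner_le_norm _ _
      _ ≤ (2 * ‖z‖ ^ γ * ‖z‖) * (M * ‖z‖) := by
          apply mul_le_mul hb_norm hgrad (norm_nonneg _) (by positivity)
  have hterm2 : |(‖z‖ ^ γ - alphaEps γ χ ε ‖z‖) * aContractHess φ v z|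
      ≤ ‖z‖ ^ γ * (4 * M * ‖z‖ ^ 2) := by
    rw [abs_mul]
    apply mul_le_mul _ (aContract_bound φ M hM.le v (hM2 v) z) (abs_nonneg _) hγ_pos.le
    rw [abs_of_nonneg (by linarith)]
    linarith
  have hsplit : ‖z‖ ^ (γ + 2) = ‖z‖ ^ γ * ‖z‖ ^ 2 := by
    rw [Real.rpow_add hz0, show ((2:ℝ)) = ((2:ℕ):ℝ) by norm_num, Real.rpow_natCast]
  calc |⟪bSing γ z - bEps γ χ ε z, gradient φ v - gradient φ w⟫
        + (‖z‖ ^ γ - alphaEps γ χ ε ‖z‖) * aContractHess φ v z|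
      ≤ |⟪bSing γ z - bEps γ χ ε z, gradient φ v - gradient φ w⟫|
        + |(‖z‖ ^ γ - alphaEps γ χ ε ‖z‖) * aContractHess φ v z| := abs_add_le _ _
    _ ≤ (2 * ‖z‖ ^ γ * ‖z‖) * (M * ‖z‖) + ‖z‖ ^ γ * (4 * M * ‖z‖ ^ 2) := by
        linarith
    _ = 6 * M * (‖z‖ ^ γ * ‖z‖ ^ 2) := by ring
    _ = 6 * M * ‖z‖ ^ (γ + 2) := by rw [hsplit]

lemma per_s_bound (γ : ℝ) (hγ1 : -3 ≤ γ) (hγ2 : γ ≤ -2) (χ : ℝ → ℝ)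
    (hχ_pos : ∀ r ≥ (0:ℝ), 0 < χ r) (hχ_large : ∀ r ≥ (1:ℝ), χ r = r)
    (hχ_ge : ∀ r ≥ (0:ℝ), r ≤ χ r)
    (ε : ℝ) (hε : 0 < ε) (φ : E3 → ℝ) (hφ : ContDiff ℝ 2 φ) (M : ℝ) (hM : 0 < M)
    (hM2 : ∀ x, ‖iteratedFDeriv ℝ 2 φ x‖ ≤ M)
    (u : E3 → ℝ) (hu_meas : Measurable u) (hu_nonneg : ∀ x, 0 ≤ u x)
    (hu_int : (∫⁻ x, ENNReal.ofReal (u x)) = 1) :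
    ENNReal.ofReal |∫ p : E3 × E3,
        (if p.1 = p.2 then 0 else
          (⟪bSing γ (p.1 - p.2) - bEps γ χ ε (p.1 - p.2),
              gradient φ p.1 - gradient φ p.2⟫
            + (‖p.1 - p.2‖ ^ γ - alphaEps γ χ ε ‖p.1 - p.2‖) *
              aContractHess φ p.1 (p.1 - p.2)) *
          (u p.1 * u p.2))|
      ≤ ENNReal.ofReal (6 * M) *
          (((∫⁻ z : E3, (if ‖z‖ ≤ ε then ENNReal.ofReal (‖z‖ ^ (γ + 2)) else 0) ^ ((3:ℝ)/2))
              ^ ((2:ℝ)/3)) * eLpNorm u 3 volume) := by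
  set U : E3 → ℝ≥0∞ := fun x => ENNReal.ofReal (u x) with hU_def
  have hU_meas : Measurable U := hu_meas.ennreal_ofReal
  set Kq : E3 → ℝ≥0∞ := fun z => if ‖z‖ ≤ ε then ENNReal.ofReal (‖z‖ ^ (γ + 2)) else 0
    with hKq_def
  have hKq_meas : Measurable Kq := by
    apply Measurable.ite (measurableSet_le measurable_norm measurable_const)
    · exact (measurable_norm.pow_const _).ennreal_ofReal
    · exact measurable_const
  set J23 : ℝ≥0∞ := (∫⁻ z : E3, Kq z ^ ((3:ℝ)/2)) ^ ((2:ℝ)/3) with hJ23_def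
  set g : E3 × E3 → ℝ := fun p =>
      (if p.1 = p.2 then 0 else
          (⟪bSing γ (p.1 - p.2) - bEps γ χ ε (p.1 - p.2),
              gradient φ p.1 - gradient φ p.2⟫
            + (‖p.1 - p.2‖ ^ γ - alphaEps γ χ ε ‖p.1 - p.2‖) *
              aContractHess φ p.1 (p.1 - p.2)) *
          (u p.1 * u p.2)) with hg_def
  set Ψ : E3 × E3 → ℝ≥0∞ := fun p => Kq (p.1 - p.2) * (U p.1 * U p.2) with hΨ_def
  have hΨ_meas : Measurable Ψ :=
    (hKq_meas.comp (measurable_fst.sub measurable_snd)).mul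
      ((hU_meas.comp measurable_fst).mul (hU_meas.comp measurable_snd))
  -- Step B : pointwise bound
  have hptB : ∀ p : E3 × E3, ENNReal.ofReal ‖g p‖ ≤ ENNReal.ofReal (6 * M) * Ψ p := by
    intro p
    have hI := pointwise_I_bound γ hγ1 hγ2 χ hχ_pos hχ_large hχ_ge ε hε φ hφ M hM hM2 p.1 p.2
    have hker_nonneg : (0:ℝ) ≤ if ‖p.1 - p.2‖ ≤ ε then ‖p.1 - p.2‖ ^ (γ + 2) else 0 := by
      split
      · exact Real.rpow_nonneg (norm_nonneg _) _
      · exact le_rfl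
    have hreal : ‖g p‖ ≤ (6 * M * (if ‖p.1 - p.2‖ ≤ ε then ‖p.1 - p.2‖ ^ (γ + 2) else 0))
        * (u p.1 * u p.2) := by
      have hgp : g p = (if p.1 = p.2 then 0 else
          (⟪bSing γ (p.1 - p.2) - bEps γ χ ε (p.1 - p.2),
              gradient φ p.1 - gradient φ p.2⟫
            + (‖p.1 - p.2‖ ^ γ - alphaEps γ χ ε ‖p.1 - p.2‖) *
              aContractHess φ p.1 (p.1 - p.2))) * (u p.1 * u p.2) := by
        by_cases hd : p.1 = p.2 <;> simp [hg_def, hd]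
      rw [hgp, Real.norm_eq_abs, abs_mul,
        abs_of_nonneg (mul_nonneg (hu_nonneg _) (hu_nonneg _))]
      exact mul_le_mul_of_nonneg_right hI (mul_nonneg (hu_nonneg _) (hu_nonneg _))
    calc ENNReal.ofReal ‖g p‖
        ≤ ENNReal.ofReal ((6 * M * (if ‖p.1 - p.2‖ ≤ ε then ‖p.1 - p.2‖ ^ (γ + 2) else 0))
            * (u p.1 * u p.2)) := ENNReal.ofReal_le_ofReal hreal
      _ = ENNReal.ofReal (6 * M) * Ψ p := by
          rw [ENNReal.ofReal_mul (mul_nonneg (by positivity) hker_nonneg),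
            ENNReal.ofReal_mul (by positivity : (0:ℝ) ≤ 6 * M),
            ENNReal.ofReal_mul (hu_nonneg p.1)]
          have hKqeq : ENNReal.ofReal (if ‖p.1 - p.2‖ ≤ ε then ‖p.1 - p.2‖ ^ (γ + 2) else 0)
              = Kq (p.1 - p.2) := by
            simp only [hKq_def]
            split_ifs <;> simp
          rw [hKqeq, hΨ_def, hU_def]
          ring
  -- Hölder for a fixed v
  have hHolder : ∀ v : E3, (∫⁻ w : E3, Kq (v - w) * U w) ≤ J23 * eLpNorm u 3 volume := by
    intro v
    have hconj : Real.HolderConjugate (3/2) 3 := Real.holderConjugate_iff.mpr ⟨by norm_num, by norm_num⟩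
    have hmeas1 : Measurable fun w : E3 => Kq (v - w) :=
      hKq_meas.comp (measurable_const.sub measurable_id)
    have hH := ENNReal.lintegral_mul_le_Lp_mul_Lq volume hconj
      (f := fun w : E3 => Kq (v - w)) (g := U) hmeas1.aemeasurable hU_meas.aemeasurable
    simp only [Pi.mul_apply] at hH
    have htrans : (∫⁻ w : E3, Kq (v - w) ^ ((3:ℝ)/2)) = ∫⁻ z : E3, Kq z ^ ((3:ℝ)/2) :=
      (MeasureTheory.Measure.measurePreserving_sub_left volume v).lintegral_comp (hKq_meas.pow_const _)
    have hsnd : (∫⁻ w : E3, U w ^ (3:ℝ)) ^ ((1:ℝ)/3) = eLpNorm u 3 volume := by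
      rw [eLpNorm_eq_lintegral_rpow_enorm_toReal (by norm_num) (by norm_num)]
      have h3 : ((3:ℝ≥0∞)).toReal = (3:ℝ) := by norm_num
      rw [h3]
      congr 1
      apply lintegral_congr
      intro w
      rw [hU_def]
      congr 1
      exact (Real.enorm_eq_ofReal (hu_nonneg w)).symm
    calc (∫⁻ w : E3, Kq (v - w) * U w)
        ≤ (∫⁻ w : E3, Kq (v - w) ^ ((3:ℝ)/2)) ^ ((1:ℝ)/(3/2))
            * (∫⁻ w : E3, U w ^ (3:ℝ)) ^ ((1:ℝ)/3) := hH
      _ = J23 * eLpNorm u 3 volume := by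
          rw [htrans, hsnd, hJ23_def, show (1:ℝ)/(3/2) = (2:ℝ)/3 by norm_num]
  -- assemble
  have hA : |∫ p : E3 × E3, g p| ≤ (∫⁻ p : E3 × E3, ENNReal.ofReal ‖g p‖).toReal := by
    rw [← Real.norm_eq_abs]
    exact norm_integral_le_lintegral_norm _
  refine le_trans (ENNReal.ofReal_le_of_le_toReal hA) ?_
  calc (∫⁻ p : E3 × E3, ENNReal.ofReal ‖g p‖)
      ≤ ∫⁻ p : E3 × E3, ENNReal.ofReal (6 * M) * Ψ p := lintegral_mono hptB
    _ = ENNReal.ofReal (6 * M) * ∫⁻ p : E3 × E3, Ψ p :=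
        lintegral_const_mul' _ _ ENNReal.ofReal_ne_top
    _ ≤ ENNReal.ofReal (6 * M) * (J23 * eLpNorm u 3 volume) := by
        apply mul_le_mul_right
        calc (∫⁻ p : E3 × E3, Ψ p)
            = ∫⁻ v : E3, ∫⁻ w : E3, Kq (v - w) * (U v * U w) := by
              rw [Measure.volume_eq_prod, lintegral_prod _ hΨ_meas.aemeasurable]
          _ = ∫⁻ v : E3, U v * ∫⁻ w : E3, Kq (v - w) * U w := by
              apply lintegral_congr
              intro v
              rw [← lintegral_const_mul' _ _ ENNReal.ofReal_ne_top]
              apply lintegral_congr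
              intro w
              ring
          _ ≤ ∫⁻ v : E3, U v * (J23 * eLpNorm u 3 volume) :=
              lintegral_mono fun v => mul_le_mul_right (hHolder v) _
          _ = (∫⁻ v : E3, U v) * (J23 * eLpNorm u 3 volume) :=
              lintegral_mul_const _ hU_meas
          _ = J23 * eLpNorm u 3 volume := by rw [hu_int, one_mul]

theorem stmt19 (γ : ℝ) (hγ : γ ∈ Set.Icc (-3 : ℝ) (-2))
    (χ : ℝ → ℝ)
    (hχ_smooth : ContDiffOn ℝ (⊤ : ℕ∞) χ (Set.Ici 0))
    (hχ_mono : MonotoneOn χ (Set.Ici 0))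
    (hχ_pos : ∀ r ≥ (0:ℝ), 0 < χ r)
    (hχ_small : ∀ r ∈ Set.Icc (0:ℝ) (1/2), χ r = 0.99)
    (hχ_large : ∀ r ≥ (1:ℝ), χ r = r)
    (hχ_lip : LipschitzOnWith 1 χ (Set.Ici 0))
    (hχ_ge : ∀ r ≥ (0:ℝ), r ≤ χ r)
    (M : ℝ) (hM : 0 < M) :
    ∃ C > (0:ℝ),
      ∀ ε ∈ Set.Ioo (0:ℝ) 1,
      ∀ φ : E3 → ℝ, ContDiff ℝ 2 φ →
        (∀ v, |φ v| ≤ M ∧ ‖iteratedFDeriv ℝ 1 φ v‖ ≤ M ∧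
          ‖iteratedFDeriv ℝ 2 φ v‖ ≤ M) →
      ∀ t : ℝ, 0 ≤ t →
      ∀ f : ℝ → E3 → ℝ,
        Measurable (Function.uncurry f) →
        (∀ s ∈ Set.Icc 0 t, (∀ v, 0 ≤ f s v) ∧ ∫⁻ v, ENNReal.ofReal (f s v) = 1) →
        (∫⁻ s in Set.Icc (0:ℝ) t, eLpNorm (f s) 3 volume) < ⊤ →
        |∫ s in (0:ℝ)..t, ∫ p : E3 × E3,
            (if p.1 = p.2 then 0 else
              (⟪bSing γ (p.1 - p.2) - bEps γ χ ε (p.1 - p.2),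
                  gradient φ p.1 - gradient φ p.2⟫
                + (‖p.1 - p.2‖ ^ γ - alphaEps γ χ ε ‖p.1 - p.2‖) *
                  aContractHess φ p.1 (p.1 - p.2)) *
              (f s p.1 * f s p.2))|
          ≤ C * ε ^ ((γ + 4) / 2) *
            (∫⁻ s in Set.Icc (0:ℝ) t, eLpNorm (f s) 3 volume).toReal := by
  obtain ⟨hγ1, hγ2⟩ := hγ
  obtain ⟨Cq, hCq, hCq_bound⟩ := kernel_lintegral_bound ((γ + 2) * (3/2))
    (by nlinarith) (by nlinarith)
  set D : ℝ≥0∞ := Cq ^ ((2:ℝ)/3) with hD_def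
  have hD : D ≠ ⊤ := ENNReal.rpow_ne_top_of_nonneg (by norm_num) hCq
  refine ⟨6 * M * D.toReal + 1, by positivity, ?_⟩
  intro ε hε φ hφ hφb t ht f hfmeas hfprob hfS
  have hM2 : ∀ x, ‖iteratedFDeriv ℝ 2 φ x‖ ≤ M := fun x => (hφb x).2.2
  set S : ℝ≥0∞ := ∫⁻ s in Set.Icc (0:ℝ) t, eLpNorm (f s) 3 volume with hS_def
  -- J^{2/3} bound
  have hJswap : ∀ z : E3,
      ((if ‖z‖ ≤ ε then ENNReal.ofReal (‖z‖ ^ (γ + 2)) else 0) : ℝ≥0∞) ^ ((3:ℝ)/2)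
        = (if ‖z‖ ≤ ε then ENNReal.ofReal (‖z‖ ^ ((γ + 2) * (3/2))) else 0) := by
    intro z
    split_ifs
    · rw [ENNReal.ofReal_rpow_of_nonneg (Real.rpow_nonneg (norm_nonneg _) _) (by norm_num),
        ← Real.rpow_mul (norm_nonneg _)]
    · exact ENNReal.zero_rpow_of_pos (by norm_num)
  have hJ23 : ((∫⁻ z : E3,
        ((if ‖z‖ ≤ ε then ENNReal.ofReal (‖z‖ ^ (γ + 2)) else 0) : ℝ≥0∞) ^ ((3:ℝ)/2))
          ^ ((2:ℝ)/3)) ≤ ENNReal.ofReal (ε ^ (γ + 4)) * D := by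
    have h1 : (∫⁻ z : E3,
        ((if ‖z‖ ≤ ε then ENNReal.ofReal (‖z‖ ^ (γ + 2)) else 0) : ℝ≥0∞) ^ ((3:ℝ)/2))
          ≤ ENNReal.ofReal (ε ^ ((γ + 2) * (3/2) + 3)) * Cq := by
      rw [lintegral_congr hJswap]
      exact hCq_bound ε hε.1
    calc ((∫⁻ z : E3,
        ((if ‖z‖ ≤ ε then ENNReal.ofReal (‖z‖ ^ (γ + 2)) else 0) : ℝ≥0∞) ^ ((3:ℝ)/2))
          ^ ((2:ℝ)/3))
        ≤ (ENNReal.ofReal (ε ^ ((γ + 2) * (3/2) + 3)) * Cq) ^ ((2:ℝ)/3) :=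
          ENNReal.rpow_le_rpow h1 (by norm_num)
      _ = ENNReal.ofReal (ε ^ ((γ + 2) * (3/2) + 3)) ^ ((2:ℝ)/3) * D :=
          ENNReal.mul_rpow_of_nonneg _ _ (by norm_num)
      _ = ENNReal.ofReal (ε ^ (γ + 4)) * D := by
          rw [ENNReal.ofReal_rpow_of_nonneg (Real.rpow_nonneg hε.1.le _) (by norm_num),
            ← Real.rpow_mul hε.1.le]
          congr 2
          ring
  set K : ℝ≥0∞ := ENNReal.ofReal (6 * M) * (ENNReal.ofReal (ε ^ (γ + 4)) * D) with hK_def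
  have hK_ne_top : K ≠ ⊤ :=
    ENNReal.mul_ne_top ENNReal.ofReal_ne_top (ENNReal.mul_ne_top ENNReal.ofReal_ne_top hD)
  calc |∫ s in (0:ℝ)..t, ∫ p : E3 × E3,
            (if p.1 = p.2 then 0 else
              (⟪bSing γ (p.1 - p.2) - bEps γ χ ε (p.1 - p.2),
                  gradient φ p.1 - gradient φ p.2⟫
                + (‖p.1 - p.2‖ ^ γ - alphaEps γ χ ε ‖p.1 - p.2‖) *
                  aContractHess φ p.1 (p.1 - p.2)) *
              (f s p.1 * f s p.2))|
      = ‖∫ s in Set.Ioc (0:ℝ) t, ∫ p : E3 × E3,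
            (if p.1 = p.2 then 0 else
              (⟪bSing γ (p.1 - p.2) - bEps γ χ ε (p.1 - p.2),
                  gradient φ p.1 - gradient φ p.2⟫
                + (‖p.1 - p.2‖ ^ γ - alphaEps γ χ ε ‖p.1 - p.2‖) *
                  aContractHess φ p.1 (p.1 - p.2)) *
              (f s p.1 * f s p.2))‖ := by
        rw [intervalIntegral.integral_of_le ht, Real.norm_eq_abs]
    _ ≤ (∫⁻ s in Set.Ioc (0:ℝ) t, ENNReal.ofReal ‖∫ p : E3 × E3,
            (if p.1 = p.2 then 0 else
              (⟪bSing γ (p.1 - p.2) - bEps γ χ ε (p.1 - p.2),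
                  gradient φ p.1 - gradient φ p.2⟫
                + (‖p.1 - p.2‖ ^ γ - alphaEps γ χ ε ‖p.1 - p.2‖) *
                  aContractHess φ p.1 (p.1 - p.2)) *
              (f s p.1 * f s p.2))‖).toReal := norm_integral_le_lintegral_norm _
    _ ≤ (K * S).toReal := by
        apply ENNReal.toReal_mono (ENNReal.mul_ne_top hK_ne_top hfS.ne)
        calc (∫⁻ s in Set.Ioc (0:ℝ) t, ENNReal.ofReal ‖∫ p : E3 × E3,
            (if p.1 = p.2 then 0 else
              (⟪bSing γ (p.1 - p.2) - bEps γ χ ε (p.1 - p.2),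
                  gradient φ p.1 - gradient φ p.2⟫
                + (‖p.1 - p.2‖ ^ γ - alphaEps γ χ ε ‖p.1 - p.2‖) *
                  aContractHess φ p.1 (p.1 - p.2)) *
              (f s p.1 * f s p.2))‖)
            ≤ ∫⁻ s in Set.Ioc (0:ℝ) t, K * eLpNorm (f s) 3 volume := by
              apply setLIntegral_mono' measurableSet_Ioc
              intro s hs
              obtain ⟨hpos, hint⟩ := hfprob s (Set.Ioc_subset_Icc_self hs)
              have humeas : Measurable (f s) := hfmeas.comp measurable_prodMk_left
              have hb := per_s_bound γ hγ1 hγ2 χ hχ_pos hχ_large hχ_ge ε hε.1 φ hφ M hM hM2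
                (f s) humeas hpos hint
              rw [Real.norm_eq_abs]
              refine hb.trans ?_
              rw [hK_def, mul_assoc]
              exact mul_le_mul_right (mul_le_mul_left hJ23 _) _
          _ = K * ∫⁻ s in Set.Ioc (0:ℝ) t, eLpNorm (f s) 3 volume :=
              lintegral_const_mul' _ _ hK_ne_top
          _ ≤ K * S := mul_le_mul_right (lintegral_mono_set Set.Ioc_subset_Icc_self) _
    _ ≤ (6 * M * D.toReal + 1) * ε ^ ((γ + 4) / 2) * S.toReal := by
        rw [ENNReal.toReal_mul, hK_def, ENNReal.toReal_mul, ENNReal.toReal_mul,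
          ENNReal.toReal_ofReal (by positivity),
          ENNReal.toReal_ofReal (Real.rpow_nonneg hε.1.le _)]
        have h1 : ε ^ (γ + 4) ≤ ε ^ ((γ + 4) / 2) :=
          Real.rpow_le_rpow_of_exponent_ge hε.1 hε.2.le (by linarith)
        have h2 : (0:ℝ) ≤ S.toReal := ENNReal.toReal_nonneg
        have h3 : (0:ℝ) ≤ D.toReal := ENNReal.toReal_nonneg
        have h4 : (0:ℝ) ≤ ε ^ ((γ + 4) / 2) := Real.rpow_nonneg hε.1.le _
        have key : 6 * M * (ε ^ (γ + 4) * D.toReal)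
            ≤ (6 * M * D.toReal + 1) * ε ^ ((γ + 4) / 2) := by
          nlinarith [mul_le_mul_of_nonneg_left h1 (by positivity : (0:ℝ) ≤ 6 * M * D.toReal)]
        calc 6 * M * (ε ^ (γ + 4) * D.toReal) * S.toReal
            ≤ ((6 * M * D.toReal + 1) * ε ^ ((γ + 4) / 2)) * S.toReal :=
              mul_le_mul_of_nonneg_right key h2
          _ = (6 * M * D.toReal + 1) * ε ^ ((γ + 4) / 2) * S.toReal := by ring

end
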